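/- Let 2 ≤ p ≤ 4, 0 < δ₁ ≤ 1 and 0 < δ₂ ≤ 1. Let τ be a sequence in T(δ₁, δ₂) and let γ be the sequence given by γ_n = min(τ_n, n) for all n ≥ 0. Then γ is a sequence in T(δ₁, δ₂) and E_p(γ) ≥ E_p(τ). -/

import Mathlib

open MeasureTheory Real Set

/-- The kernel `K_p(τ; x)`. -/
noncomputable def Kp (p : ℝ) (τ : ℕ → ℝ) (x : ℝ) : ℝ :=
  ∑' n : ℕ, (Set.Ioo (τ n) (τ (n + 1))).indicator
    (fun y => Real.sin (p / 2 * π * (y - n)) / (π * y)) x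

/-- The quantity `E_p(τ)`. -/
noncomputable def Ep (p : ℝ) (τ : ℕ → ℝ) : ℝ :=
  ∫ x in Set.Ioi (0 : ℝ), (max 0 (Kp p τ x)) ^ 2

/-- The set of sequences `T(δ₁, δ₂)`. -/
def Tset (δ₁ δ₂ : ℝ) : Set (ℕ → ℝ) :=
  {τ | τ 0 = 0 ∧ StrictMono τ ∧ δ₁ ≤ τ 1 ∧ ∀ n, 1 ≤ n → δ₂ ≤ τ (n + 1) - τ n}

/-- The supremum `ℰ_p(δ₁, δ₂) = sup_{τ ∈ T(δ₁,δ₂)} E_p(τ)`. -/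
noncomputable def Esup (p δ₁ δ₂ : ℝ) : ℝ := sSup (Ep p '' Tset δ₁ δ₂)

/-! Write `q = posSinSq = max 0 sin ^ 2` and `a = p π / 2 ∈ [π, 2π]`. Replace the breakpoints
`τ n` by `min (τ n) n` one at a time. Each step lowers one breakpoint `c = τ (k + 1) > k + 1` to
`r = k + 1`, which moves `(r, c)` into the next interval of the kernel and changes `E_p` by
`∫_r^c (q (a (x - r)) - q (a (x - r) + a)) (π x)⁻² dx`. As `q` vanishes on `[π, 2π]`, a window of
length `a` carries at most the mass of `[0, a]`, so every primitive of the bracket from `r` is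
nonnegative; integrating by parts against the decreasing weight `(π x)⁻²` makes the change
nonnegative. The partial replacements agree with `γ` below `γ N → ∞` and are dominated by
`(p / 2)²` on `(0, γ 1)` (from `sin t ≤ t`) and `(π x)⁻²` beyond, so dominated convergence passes
the inequality to `γ`. -/

noncomputable def posSinSq (s : ℝ) : ℝ := max 0 (sin s) ^ 2

lemma posSinSq_nonneg (s : ℝ) : 0 ≤ posSinSq s := sq_nonneg _

@[fun_prop]
lemma continuous_posSinSq : Continuous posSinSq := by
  unfold posSinSq; fun_prop

lemma posSinSq_le_one (s : ℝ) : posSinSq s ≤ 1 :=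
  pow_le_one₀ (le_max_left _ _) (max_le zero_le_one (sin_le_one s))

lemma posSinSq_le_sq (s : ℝ) : posSinSq s ≤ s ^ 2 := by
  rw [posSinSq, ← sq_abs s]
  exact pow_le_pow_left₀ (le_max_left _ _)
    (max_le (abs_nonneg s) ((le_abs_self _).trans abs_sin_le_abs)) 2

lemma posSinSq_periodic : Function.Periodic posSinSq (2 * π) := fun s => by
  simp only [posSinSq, sin_add_two_pi]

lemma posSinSq_eq_zero {s : ℝ} (h₁ : π ≤ s) (h₂ : s ≤ 2 * π) : posSinSq s = 0 := by
  have : sin s ≤ 0 := by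
    simpa [sin_sub_pi] using sin_nonneg_of_nonneg_of_le_pi (x := s - π) (by linarith) (by linarith)
  simp [posSinSq, max_eq_left this]

section Shift

variable {a : ℝ} (ha₁ : π ≤ a) (ha₂ : a ≤ 2 * π)
include ha₁ ha₂

lemma integral_posSinSq_window_le (y : ℝ) :
    ∫ s in y..y + a, posSinSq s ≤ ∫ s in 0..a, posSinSq s := by
  have hint : ∀ u v : ℝ, IntervalIntegrable posSinSq volume u v :=
    fun _ _ => continuous_posSinSq.intervalIntegrable _ _
  have h_tail : ∫ s in a..2 * π, posSinSq s = 0 := by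
    refine (intervalIntegral.integral_congr fun s hs => ?_).trans intervalIntegral.integral_zero
    rw [uIcc_of_le ha₂] at hs
    exact posSinSq_eq_zero (ha₁.trans hs.1) hs.2
  calc ∫ s in y..y + a, posSinSq s ≤ ∫ s in y..y + 2 * π, posSinSq s :=
        intervalIntegral.integral_mono_interval le_rfl (by linarith) (by linarith)
          (.of_forall posSinSq_nonneg) (hint _ _)
    _ = ∫ s in 0..0 + 2 * π, posSinSq s := posSinSq_periodic.intervalIntegral_add_eq y 0
    _ = ∫ s in 0..a, posSinSq s := by
        rw [zero_add, ← intervalIntegral.integral_add_adjacent_intervals (hint 0 a) (hint a _),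
          h_tail, add_zero]

lemma integral_posSinSq_sub_shift_nonneg (r x : ℝ) :
    0 ≤ ∫ s in r..x, (posSinSq (a * (s - r)) - posSinSq (a * (s - r) + a)) := by
  have ha : 0 < a := pi_pos.trans_le ha₁
  have hint : ∀ u v : ℝ, IntervalIntegrable posSinSq volume u v :=
    fun _ _ => continuous_posSinSq.intervalIntegrable _ _
  have hq₁ : Continuous fun s => posSinSq (a * s) := by fun_prop
  have hq₂ : Continuous fun s => posSinSq (a * s + a) := by fun_prop
  rw [intervalIntegral.integral_comp_sub_right
      (fun s => posSinSq (a * s) - posSinSq (a * s + a)) r, sub_self,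
    intervalIntegral.integral_sub (hq₁.intervalIntegrable _ _) (hq₂.intervalIntegrable _ _),
    intervalIntegral.integral_comp_mul_left posSinSq ha.ne',
    intervalIntegral.integral_comp_mul_add posSinSq ha.ne', ← smul_sub, mul_zero, zero_add]
  refine smul_nonneg (inv_nonneg.2 ha.le) (sub_nonneg.2 ?_)
  set X := a * (x - r)
  have h₁ := intervalIntegral.integral_add_adjacent_intervals (hint 0 a) (hint a X)
  have h₂ := intervalIntegral.integral_add_adjacent_intervals (hint a X) (hint X (X + a))
  linarith [integral_posSinSq_window_le ha₁ ha₂ X]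

end Shift

lemma integral_mul_nonneg_of_primitive_nonneg {h w w' : ℝ → ℝ} {a b : ℝ} (hab : a ≤ b)
    (hh : Continuous h) (hH : ∀ x ∈ Icc a b, 0 ≤ ∫ s in a..x, h s)
    (hw : ∀ x ∈ Icc a b, HasDerivAt w (w' x) x) (hw'c : ContinuousOn w' (Icc a b))
    (hw' : ∀ x ∈ Icc a b, w' x ≤ 0) (hwb : 0 ≤ w b) :
    0 ≤ ∫ x in a..b, h x * w x := by
  rw [← uIcc_of_le hab] at hw hw'c
  have hH' : ∀ x ∈ uIcc a b, HasDerivAt (fun x => ∫ s in a..x, h s) (h x) x := fun x _ =>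
    (hh.integral_hasStrictDerivAt a x).hasDerivAt
  have hparts := intervalIntegral.integral_mul_deriv_eq_deriv_mul hw hH'
    (hw'c.intervalIntegrable) (hh.intervalIntegrable _ _)
  have hrest : 0 ≤ ∫ x in a..b, -(w' x * ∫ s in a..x, h s) :=
    intervalIntegral.integral_nonneg hab fun x hx =>
      neg_nonneg.2 (mul_nonpos_of_nonpos_of_nonneg (hw' x hx) (hH x hx))
  rw [intervalIntegral.integral_neg] at hrest
  simp only [intervalIntegral.integral_same, mul_zero, sub_zero] at hparts
  simp_rw [mul_comm (h _)]
  rw [hparts]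
  nlinarith [hH b ⟨hab, le_rfl⟩]

lemma integral_posSinSq_shift_mul_inv_sq_nonneg {a r c : ℝ} (ha₁ : π ≤ a) (ha₂ : a ≤ 2 * π)
    (hr : 0 < r) (hrc : r ≤ c) :
    0 ≤ ∫ x in r..c, (posSinSq (a * (x - r)) - posSinSq (a * (x - r) + a)) * (π * x)⁻¹ ^ 2 := by
  have hpos : ∀ x ∈ Icc r c, 0 < x := fun x hx => hr.trans_le hx.1
  refine integral_mul_nonneg_of_primitive_nonneg (w' := fun x => -(2 / π ^ 2) / x ^ 3) hrc
    (by fun_prop) (fun x _ => integral_posSinSq_sub_shift_nonneg ha₁ ha₂ r x)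
    (fun x hx => ?_) (continuousOn_const.div (by fun_prop) fun x hx => (pow_pos (hpos x hx) 3).ne')
    (fun x hx => div_nonpos_of_nonpos_of_nonneg (neg_nonpos.2 (by positivity))
      (pow_pos (hpos x hx) 3).le)
    (by positivity)
  have hx := (hpos x hx).ne'
  have hd := (((hasDerivAt_id x).const_mul π).inv (mul_ne_zero pi_ne_zero hx)).pow 2
  refine hd.congr_deriv ?_
  simp only [id, Pi.inv_apply]
  norm_num
  field_simp

section Kernel

variable {p : ℝ} {σ : ℕ → ℝ} {x : ℝ}

lemma StrictMono.notMem_Ioo_of_mem_Ioo (hσ : StrictMono σ) {m n : ℕ}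
    (hm : x ∈ Ioo (σ m) (σ (m + 1))) (hn : n ≠ m) : x ∉ Ioo (σ n) (σ (n + 1)) := fun hx => by
  rcases hn.lt_or_gt with h | h
  · exact (hx.2.trans_le (hσ.monotone h)).not_gt hm.1
  · exact (hm.2.trans_le (hσ.monotone h)).not_gt hx.1

lemma Kp_eq_zero (h : ∀ n, x ∉ Ioo (σ n) (σ (n + 1))) : Kp p σ x = 0 := by
  rw [Kp, tsum_congr fun n => indicator_of_notMem (h n) _, tsum_zero]

lemma Kp_eq_of_mem (hσ : StrictMono σ) {m : ℕ} (hm : x ∈ Ioo (σ m) (σ (m + 1))) :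
    Kp p σ x = sin (p / 2 * π * (x - m)) / (π * x) := by
  rw [Kp, tsum_eq_single m fun n hn => indicator_of_notMem (hσ.notMem_Ioo_of_mem_Ioo hm hn) _,
    indicator_of_mem hm]

lemma hasSum_Kp (hσ : StrictMono σ) (x : ℝ) :
    HasSum (fun n : ℕ => (Ioo (σ n) (σ (n + 1))).indicator
      (fun y => sin (p / 2 * π * (y - n)) / (π * y)) x) (Kp p σ x) := by
  refine Summable.hasSum ?_
  by_cases h : ∃ m, x ∈ Ioo (σ m) (σ (m + 1))
  · obtain ⟨m, hm⟩ := h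
    exact summable_of_ne_finset_zero (s := {m}) fun n hn =>
      indicator_of_notMem (hσ.notMem_Ioo_of_mem_Ioo hm (Finset.notMem_singleton.1 hn)) _
  · push Not at h
    exact summable_of_ne_finset_zero (s := ∅) fun n _ => indicator_of_notMem (h n) _

lemma Kp_congr {σ' : ℕ → ℝ} (h : ∀ n, x ∈ Ioo (σ n) (σ (n + 1)) ↔ x ∈ Ioo (σ' n) (σ' (n + 1))) :
    Kp p σ x = Kp p σ' x := by
  refine tsum_congr fun n => ?_
  by_cases hx : x ∈ Ioo (σ n) (σ (n + 1))
  · rw [indicator_of_mem hx, indicator_of_mem ((h n).1 hx)]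
  · rw [indicator_of_notMem hx, indicator_of_notMem (mt (h n).2 hx)]

lemma measurable_Kp (hσ : StrictMono σ) : Measurable (Kp p σ) := by
  refine measurable_of_tendsto_metrizable (f := fun N x => ∑ n ∈ Finset.range N,
      (Ioo (σ n) (σ (n + 1))).indicator (fun y => sin (p / 2 * π * (y - n)) / (π * y)) x)
    (fun N => ?_) (tendsto_pi_nhds.2 fun x => (hasSum_Kp hσ x).tendsto_sum_nat)
  exact Finset.measurable_sum _ fun n _ => Measurable.indicator (by fun_prop) measurableSet_Ioo

end Kernel

noncomputable def epIntegrand (p : ℝ) (σ : ℕ → ℝ) (x : ℝ) : ℝ := max 0 (Kp p σ x) ^ 2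

lemma Ep_eq_integral_epIntegrand (p : ℝ) (σ : ℕ → ℝ) :
    Ep p σ = ∫ x in Ioi 0, epIntegrand p σ x := rfl

lemma epIntegrand_nonneg (p : ℝ) (σ : ℕ → ℝ) (x : ℝ) : 0 ≤ epIntegrand p σ x := sq_nonneg _

noncomputable def epBound (p a x : ℝ) : ℝ :=
  (Ioo 0 a).indicator (fun _ => (p / 2) ^ 2) x + (Ici a).indicator (fun x => (π * x)⁻¹ ^ 2) x

lemma integrable_epBound (p : ℝ) {a : ℝ} (ha : 0 < a) : Integrable (epBound p a) := by
  refine Integrable.add ((integrable_indicator_iff measurableSet_Ioo).2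
    (integrableOn_const measure_Ioo_lt_top.ne)) ((integrable_indicator_iff measurableSet_Ici).2 ?_)
  rw [integrableOn_Ici_iff_integrableOn_Ioi]
  refine IntegrableOn.congr_fun
    ((integrableOn_Ioi_rpow_of_lt (by norm_num : (-2 : ℝ) < -1) ha).const_mul (π⁻¹ ^ 2))
    (fun x hx => ?_) measurableSet_Ioi
  rw [rpow_neg (ha.trans hx).le, rpow_two]
  ring

section Integrand

variable {p : ℝ} {σ : ℕ → ℝ} (hσ : StrictMono σ) (h₀ : σ 0 = 0)
include hσ h₀

lemma epIntegrand_eq_of_mem {x : ℝ} {m : ℕ} (hm : x ∈ Ioo (σ m) (σ (m + 1))) :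
    epIntegrand p σ x = posSinSq (p / 2 * π * (x - m)) * (π * x)⁻¹ ^ 2 := by
  have hx : 0 < π * x := mul_pos pi_pos (h₀ ▸ (hσ.monotone m.zero_le).trans_lt hm.1)
  rw [epIntegrand, posSinSq, Kp_eq_of_mem hσ hm, div_eq_mul_inv, ← mul_pow,
    max_mul_of_nonneg _ _ (inv_pos.2 hx).le, zero_mul]

lemma epIntegrand_le_inv_sq (x : ℝ) : epIntegrand p σ x ≤ (π * x)⁻¹ ^ 2 := by
  by_cases h : ∃ m, x ∈ Ioo (σ m) (σ (m + 1))
  · obtain ⟨m, hm⟩ := h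
    rw [epIntegrand_eq_of_mem hσ h₀ hm]
    exact mul_le_of_le_one_left (sq_nonneg _) (posSinSq_le_one _)
  · push Not at h
    rw [epIntegrand, Kp_eq_zero h, max_self, zero_pow two_ne_zero]
    positivity

lemma epIntegrand_le_of_lt {x : ℝ} (hx : 0 < x) (hx₁ : x < σ 1) :
    epIntegrand p σ x ≤ (p / 2) ^ 2 := by
  have hm : x ∈ Ioo (σ 0) (σ (0 + 1)) := ⟨h₀ ▸ hx, hx₁⟩
  rw [epIntegrand_eq_of_mem hσ h₀ hm]
  calc posSinSq (p / 2 * π * (x - (0 : ℕ))) * (π * x)⁻¹ ^ 2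
      ≤ (p / 2 * π * x) ^ 2 * (π * x)⁻¹ ^ 2 := by
        gcongr
        simpa using posSinSq_le_sq (p / 2 * π * x)
    _ = (p / 2) ^ 2 := by field_simp

lemma epIntegrand_le_epBound {x : ℝ} (hx : 0 < x) : epIntegrand p σ x ≤ epBound p (σ 1) x := by
  rcases lt_or_ge x (σ 1) with hx₁ | hx₁
  · simpa [epBound, hx, hx₁, not_le.2 hx₁] using epIntegrand_le_of_lt hσ h₀ hx hx₁
  · simpa [epBound, hx₁, not_lt.2 hx₁] using epIntegrand_le_inv_sq hσ h₀ x

lemma integrableOn_epIntegrand : IntegrableOn (epIntegrand p σ) (Ioi 0) := by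
  refine Integrable.mono' (integrable_epBound p (h₀ ▸ hσ zero_lt_one)).integrableOn
    (((measurable_const.max (measurable_Kp hσ)).pow_const 2).aestronglyMeasurable) ?_
  refine (ae_restrict_iff' measurableSet_Ioi).2 (.of_forall fun x hx => ?_)
  rw [Real.norm_of_nonneg (epIntegrand_nonneg p σ x)]
  exact epIntegrand_le_epBound hσ h₀ hx

end Integrand

section Update

open Function

variable {σ : ℕ → ℝ} {k : ℕ} {r : ℝ}

lemma StrictMono.update_succ (hσ : StrictMono σ) (hk : σ k < r) (hk' : r < σ (k + 2)) :
    StrictMono (update σ (k + 1) r) := by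
  refine strictMono_nat_of_lt_succ fun n => ?_
  rcases lt_trichotomy n k with hn | rfl | hn
  · simpa [update_apply, hn.ne, (hn.trans k.lt_succ_self).ne] using hσ n.lt_succ_self
  · simpa [update_apply] using hk
  rcases (Nat.succ_le_of_lt hn).eq_or_lt with rfl | hn
  · simpa [update_apply] using hk'
  · simpa [update_apply, hn.ne', (k.lt_succ_self.trans hn).ne'] using hσ n.lt_succ_self

lemma mem_Ioo_update_succ_iff {x : ℝ} (hr : r ≤ σ (k + 1)) (hx : x < r ∨ σ (k + 1) < x)
    (n : ℕ) :
    x ∈ Ioo (update σ (k + 1) r n) (update σ (k + 1) r (n + 1)) ↔ x ∈ Ioo (σ n) (σ (n + 1)) := by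
  simp only [mem_Ioo, update_apply, Nat.add_right_cancel_iff]
  split_ifs with h₁ h₂ h₂
  · omega
  · subst h₁
    constructor <;> rintro ⟨h, h'⟩ <;> refine ⟨?_, h'⟩ <;> rcases hx with hx | hx <;> linarith
  · subst h₂
    constructor <;> rintro ⟨h, h'⟩ <;> refine ⟨h, ?_⟩ <;> rcases hx with hx | hx <;> linarith
  · exact Iff.rfl

theorem Ep_le_Ep_update_succ {p : ℝ} (hp₂ : 2 ≤ p) (hp₄ : p ≤ 4) (hσ : StrictMono σ)
    (h₀ : σ 0 = 0) (hk : σ k < (k + 1 : ℕ)) (hk' : ((k + 1 : ℕ) : ℝ) < σ (k + 1)) :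
    Ep p σ ≤ Ep p (update σ (k + 1) (k + 1 : ℕ)) := by
  set r : ℝ := ((k + 1 : ℕ) : ℝ)
  set c := σ (k + 1)
  set σ' := update σ (k + 1) r
  set a := p / 2 * π
  have hc₂ : c < σ (k + 2) := hσ (k + 1).lt_succ_self
  have hσ' : StrictMono σ' := hσ.update_succ hk (hk'.trans hc₂)
  have h₀' : σ' 0 = 0 := by simp [σ', h₀]
  have hoff : ∀ x, x ∉ Icc r c → epIntegrand p σ' x = epIntegrand p σ x := fun x hx => by
    have hx' : x < r ∨ c < x := by rwa [mem_Icc, not_and_or, not_le, not_le] at hx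
    rw [epIntegrand, epIntegrand, Kp_congr (mem_Ioo_update_succ_iff hk'.le hx')]
  have hon : ∀ x ∈ Ioo r c, epIntegrand p σ' x - epIntegrand p σ x =
      (posSinSq (a * (x - r)) - posSinSq (a * (x - r) + a)) * (π * x)⁻¹ ^ 2 := fun x hx => by
    have hx' : x ∈ Ioo (σ' (k + 1)) (σ' (k + 1 + 1)) := by simpa [σ'] using ⟨hx.1, hx.2.trans hc₂⟩
    rw [epIntegrand_eq_of_mem hσ' h₀' hx',
      epIntegrand_eq_of_mem hσ h₀ (m := k) ⟨hk.trans hx.1, hx.2⟩]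
    simp only [r, a, Nat.cast_succ]
    ring_nf
  have hdiff : Ep p σ' - Ep p σ = ∫ x in r..c,
      (posSinSq (a * (x - r)) - posSinSq (a * (x - r) + a)) * (π * x)⁻¹ ^ 2 := by
    have hr : 0 < r := by positivity
    rw [Ep_eq_integral_epIntegrand, Ep_eq_integral_epIntegrand,
      ← integral_sub (integrableOn_epIntegrand hσ' h₀') (integrableOn_epIntegrand hσ h₀),
      setIntegral_eq_of_subset_of_ae_sdiff_eq_zero (s := Ioo r c)
        measurableSet_Ioi.nullMeasurableSet (fun x hx => hr.trans hx.1) ?_,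
      setIntegral_congr_fun measurableSet_Ioo hon,
      intervalIntegral.integral_of_le hk'.le, integral_Ioc_eq_integral_Ioo]
    filter_upwards [Ioo_ae_eq_Icc (μ := volume) (a := r) (b := c)] with x hx hxs
    rw [hoff x (mt (Iff.of_eq hx).2 hxs.2), sub_self]
  have hnonneg := integral_posSinSq_shift_mul_inv_sq_nonneg (a := a)
    (by simp only [a]; nlinarith [pi_pos]) (by simp only [a]; nlinarith [pi_pos]) (by positivity)
    hk'.le
  linarith

end Update

section Tset

variable {δ₁ δ₂ : ℝ} {σ σ' : ℕ → ℝ}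

lemma min_mem_Tset (hσ : σ ∈ Tset δ₁ δ₂) (hσ' : σ' ∈ Tset δ₁ δ₂) :
    (fun n => min (σ n) (σ' n)) ∈ Tset δ₁ δ₂ := by
  obtain ⟨h₀, hmono, h₁, hgap⟩ := hσ
  obtain ⟨h₀', hmono', h₁', hgap'⟩ := hσ'
  refine ⟨by simp [h₀, h₀'], fun m n h => lt_min ((min_le_left _ _).trans_lt (hmono h))
    ((min_le_right _ _).trans_lt (hmono' h)), le_min h₁ h₁', fun n hn => ?_⟩
  show δ₂ ≤ min (σ (n + 1)) (σ' (n + 1)) - min (σ n) (σ' n)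
  rcases min_choice (σ (n + 1)) (σ' (n + 1)) with h | h <;> rw [h]
  · linarith [hgap n hn, min_le_left (σ n) (σ' n)]
  · linarith [hgap' n hn, min_le_right (σ n) (σ' n)]

lemma natCast_mem_Tset (hδ₁ : δ₁ ≤ 1) (hδ₂ : δ₂ ≤ 1) : (fun n : ℕ => (n : ℝ)) ∈ Tset δ₁ δ₂ :=
  ⟨Nat.cast_zero, Nat.strictMono_cast, by simpa using hδ₁, fun n _ => by simpa using hδ₂⟩

lemma tendsto_atTop_of_mem_Tset (hδ₂ : 0 < δ₂) (hσ : σ ∈ Tset δ₁ δ₂) :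
    Filter.Tendsto σ Filter.atTop Filter.atTop := by
  obtain ⟨-, -, -, hgap⟩ := hσ
  have hlin : ∀ n : ℕ, σ 1 + n * δ₂ ≤ σ (n + 1) := by
    intro n
    induction n with
    | zero => simp
    | succ n ih => push_cast; linarith [hgap (n + 1) n.succ_pos]
  refine (Filter.tendsto_add_atTop_iff_nat 1).1 (Filter.tendsto_atTop_mono hlin ?_)
  exact Filter.tendsto_atTop_add_const_left _ _
    (tendsto_natCast_atTop_atTop.atTop_mul_const hδ₂)

end Tset

noncomputable def capPrefix (τ : ℕ → ℝ) (N n : ℕ) : ℝ := if n ≤ N then min (τ n) n else τ n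

section CapPrefix

open Function Filter Topology

variable {τ : ℕ → ℝ}

lemma capPrefix_succ (N : ℕ) :
    capPrefix τ (N + 1) = update (capPrefix τ N) (N + 1) (min (τ (N + 1)) (N + 1 : ℕ)) := by
  funext n
  rcases lt_trichotomy n (N + 1) with hn | rfl | hn
  · simp [capPrefix, hn.ne, Nat.le_of_lt_succ hn, not_lt.2 hn.le]
  · simp [capPrefix]
  · simp [capPrefix, hn.ne', not_le.2 hn, not_le.2 (N.lt_succ_self.trans hn)]

lemma capPrefix_le (N n : ℕ) : capPrefix τ N n ≤ τ n := by
  unfold capPrefix; split_ifs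
  exacts [min_le_left _ _, le_rfl]

lemma min_le_capPrefix (N n : ℕ) : min (τ n) n ≤ capPrefix τ N n := by
  unfold capPrefix; split_ifs
  exacts [le_rfl, min_le_left _ _]

lemma capPrefix_apply_zero (h₀ : τ 0 = 0) (N : ℕ) : capPrefix τ N 0 = 0 := by
  simp [capPrefix, h₀]

lemma strictMono_capPrefix (hτ : StrictMono τ) (N : ℕ) : StrictMono (capPrefix τ N) := by
  refine strictMono_nat_of_lt_succ fun n => ?_
  rcases lt_or_ge n N with hn | hn
  · simp only [capPrefix, hn.le, Nat.succ_le_of_lt hn, if_true]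
    exact lt_min ((min_le_left _ _).trans_lt (hτ n.lt_succ_self))
      ((min_le_right _ _).trans_lt (by push_cast; linarith))
  · rw [show capPrefix τ N (n + 1) = τ (n + 1) from if_neg (by omega)]
    exact (capPrefix_le N n).trans_lt (hτ n.lt_succ_self)

variable (hτ : StrictMono τ) (h₀ : τ 0 = 0)
include hτ h₀

lemma Ep_le_Ep_capPrefix {p : ℝ} (hp₂ : 2 ≤ p) (hp₄ : p ≤ 4) (N : ℕ) :
    Ep p τ ≤ Ep p (capPrefix τ N) := by
  induction N with
  | zero =>
    rw [show capPrefix τ 0 = τ from funext fun n => by cases n <;> simp [capPrefix, h₀]]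
  | succ N ih =>
    rw [capPrefix_succ]
    have hN : capPrefix τ N (N + 1) = τ (N + 1) := by simp [capPrefix]
    rcases le_or_gt (τ (N + 1)) (N + 1 : ℕ) with hle | hlt
    · rwa [min_eq_left hle, ← hN, update_eq_self]
    · rw [min_eq_right hlt.le]
      refine ih.trans (Ep_le_Ep_update_succ hp₂ hp₄ (strictMono_capPrefix hτ N)
        (capPrefix_apply_zero h₀ N) ?_ (hN ▸ hlt))
      simp only [capPrefix, le_rfl, if_true]
      exact (min_le_right _ _).trans_lt (by push_cast; linarith)

lemma tendsto_Ep_capPrefix (p : ℝ) (hγ : Tendsto (fun n => min (τ n) n) atTop atTop) :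
    Tendsto (fun N => Ep p (capPrefix τ N)) atTop (𝓝 (Ep p fun n => min (τ n) n)) := by
  set γ : ℕ → ℝ := fun n => min (τ n) n
  simp only [Ep_eq_integral_epIntegrand]
  have hγ₁ : 0 < γ 1 := lt_min (h₀ ▸ hτ zero_lt_one) (by norm_num)
  refine tendsto_integral_filter_of_dominated_convergence (epBound p (γ 1))
    (.of_forall fun N => (integrableOn_epIntegrand (strictMono_capPrefix hτ N)
      (capPrefix_apply_zero h₀ N)).aestronglyMeasurable) ?_
    (integrable_epBound p hγ₁).integrableOn
    ((ae_restrict_iff' measurableSet_Ioi).2 (.of_forall fun x _ => ?_))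
  · filter_upwards [eventually_ge_atTop 1] with N hN
    refine (ae_restrict_iff' measurableSet_Ioi).2 (.of_forall fun x hx => ?_)
    rw [Real.norm_of_nonneg (epIntegrand_nonneg _ _ _), ← show capPrefix τ N 1 = γ 1 from if_pos hN]
    exact epIntegrand_le_epBound (strictMono_capPrefix hτ N) (capPrefix_apply_zero h₀ N) hx
  · refine tendsto_const_nhds.congr' ?_
    filter_upwards [hγ.eventually_gt_atTop x] with N hN
    refine congrArg (max 0 · ^ 2) (Kp_congr fun n => ?_)
    rcases lt_or_ge n N with hn | hn
    · simp [γ, capPrefix, hn.le, Nat.succ_le_of_lt hn]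
    · have hγn : γ N ≤ γ n := min_le_min (hτ.monotone hn) (Nat.cast_le.2 hn)
      exact iff_of_false (fun h => (hN.trans_le hγn).not_gt h.1)
        (fun h => (hN.trans_le (hγn.trans (min_le_capPrefix N n))).not_gt h.1)

end CapPrefix

theorem stmt11_general (p δ₁ δ₂ : ℝ) (hp2 : 2 ≤ p) (hp4 : p ≤ 4)
    (hδ1' : δ₁ ≤ 1) (hδ2 : 0 < δ₂) (hδ2' : δ₂ ≤ 1)
    (τ : ℕ → ℝ) (hτ : τ ∈ Tset δ₁ δ₂)
    (γ : ℕ → ℝ) (hγ : ∀ n : ℕ, γ n = min (τ n) n) :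
    γ ∈ Tset δ₁ δ₂ ∧ Ep p τ ≤ Ep p γ := by
  obtain rfl : γ = fun n => min (τ n) n := funext hγ
  have hγT := min_mem_Tset hτ (natCast_mem_Tset hδ1' hδ2')
  refine ⟨hγT, ge_of_tendsto (tendsto_Ep_capPrefix hτ.2.1 hτ.1 p
    (tendsto_atTop_of_mem_Tset hδ2 hγT)) (.of_forall (Ep_le_Ep_capPrefix hτ.2.1 hτ.1 hp2 hp4))⟩

theorem stmt11 (p δ₁ δ₂ : ℝ) (hp2 : 2 ≤ p) (hp4 : p ≤ 4)
    (hδ1 : 0 < δ₁) (hδ1' : δ₁ ≤ 1) (hδ2 : 0 < δ₂) (hδ2' : δ₂ ≤ 1)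
    (τ : ℕ → ℝ) (hτ : τ ∈ Tset δ₁ δ₂)
    (γ : ℕ → ℝ) (hγ : ∀ n : ℕ, γ n = min (τ n) n) :
    γ ∈ Tset δ₁ δ₂ ∧ Ep p τ ≤ Ep p γ :=
  stmt11_general p δ₁ δ₂ hp2 hp4 hδ1' hδ2 hδ2' τ hτ γ hγ
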